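/- arXiv:2411.19241 — 4 statements merged into one kernel-verified Lean document; each statement's English description precedes it below -/
import Mathlib

section
/- For self-adjoint bounded operators H, H' and a bounded operator A on a finite-dimensional Hilbert space, with H and H' not assumed to commute, the norm difference of the two Heisenberg evolutions satisfies ‖e^{itH} A e^{-itH} − e^{itH'} A e^{-itH'}‖ ≤ 2|t| · ‖A‖ · ‖H − H'‖. -/
open NormedSpace

/-- Mean-value / Duhamel estimate for the difference of two operator exponentials whose
one-parameter groups are norm-bounded by `1`. -/
theorem exp_smul_sub_exp_smul_norm_le {E : Type*} [NormedAddCommGroup E] [InnerProductSpace ℂ E]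
    [FiniteDimensional ℂ E] (B B' : E →L[ℂ] E)
    (hB : ∀ s : ℝ, ‖exp (s • B)‖ ≤ 1) (hB' : ∀ s : ℝ, ‖exp (s • B')‖ ≤ 1) (t : ℝ) :
    ‖exp (t • B) - exp (t • B')‖ ≤ |t| * ‖B - B'‖ := by
  set F : ℝ → (E →L[ℂ] E) := fun s => exp (s • B) * exp ((t - s) • B') with hF
  have hderiv : ∀ s : ℝ,
      HasDerivAt F (exp (s • B) * (B - B') * exp ((t - s) • B')) s := by
    intro s
    have h1 : HasDerivAt (fun u : ℝ => exp (u • B)) (exp (s • B) * B) s :=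
      hasDerivAt_exp_smul_const B s
    have h2 : HasDerivAt (fun u : ℝ => exp ((t - u) • B'))
        ((-1 : ℝ) • (B' * exp ((t - s) • B'))) s := by
      have inner : HasDerivAt (fun u : ℝ => t - u) (-1) s := by
        simpa using (hasDerivAt_id s).const_sub t
      exact (hasDerivAt_exp_smul_const' B' (t - s)).scomp s inner
    have := h1.mul h2
    convert this using 1
    case e'_4 => rfl
    case e'_5 => rfl
    case e'_6 => rfl
    case e'_8 => rfl
    rw [neg_one_smul]
    noncomm_ring
  have key := Convex.norm_image_sub_le_of_norm_hasDerivWithin_le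
    (f := F) (f' := fun s => exp (s • B) * (B - B') * exp ((t - s) • B'))
    (C := ‖B - B'‖) (s := Set.univ)
    (fun x _ => (hderiv x).hasDerivWithinAt)
    (fun x _ => by
      calc ‖exp (x • B) * (B - B') * exp ((t - x) • B')‖
          ≤ ‖exp (x • B) * (B - B')‖ * ‖exp ((t - x) • B')‖ := norm_mul_le _ _
        _ ≤ ‖exp (x • B)‖ * ‖B - B'‖ * ‖exp ((t - x) • B')‖ := by
            gcongr; exact norm_mul_le _ _
        _ ≤ 1 * ‖B - B'‖ * 1 := by
            gcongr
            · exact hB x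
            · exact hB' (t - x)
        _ = ‖B - B'‖ := by ring)
    convex_univ (Set.mem_univ 0) (Set.mem_univ t)
  have hFt : F t = exp (t • B) := by simp [hF]
  have hF0 : F 0 = exp (t • B') := by simp [hF]
  rw [hFt, hF0] at key
  calc ‖exp (t • B) - exp (t • B')‖ ≤ ‖B - B'‖ * ‖t - 0‖ := key
    _ = |t| * ‖B - B'‖ := by rw [sub_zero, Real.norm_eq_abs, mul_comm]

/-- Duhamel-type estimate: for self-adjoint bounded operators `H`, `H'` and a bounded
operator `A` on a finite-dimensional Hilbert space, the two Heisenberg evolutions differ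
in norm by at most `2 |t| ‖A‖ ‖H - H'‖`. -/
theorem heisenberg_norm_diff_le
    {E : Type*} [NormedAddCommGroup E] [InnerProductSpace ℂ E] [FiniteDimensional ℂ E]
    (H H' A : E →L[ℂ] E) (hH : IsSelfAdjoint H) (hH' : IsSelfAdjoint H') (t : ℝ) :
    ‖NormedSpace.exp ((Complex.I * (t : ℂ)) • H) * A *
          NormedSpace.exp (-(Complex.I * (t : ℂ)) • H) -
        NormedSpace.exp ((Complex.I * (t : ℂ)) • H') * A *
          NormedSpace.exp (-(Complex.I * (t : ℂ)) • H')‖ ≤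
      2 * |t| * ‖A‖ * ‖H - H'‖ := by
  rcases subsingleton_or_nontrivial E with hE | hE
  · have : Subsingleton (E →L[ℂ] E) := inferInstance
    rw [Subsingleton.elim (NormedSpace.exp ((Complex.I * (t : ℂ)) • H) * A *
          NormedSpace.exp (-(Complex.I * (t : ℂ)) • H) -
        NormedSpace.exp ((Complex.I * (t : ℂ)) • H') * A *
          NormedSpace.exp (-(Complex.I * (t : ℂ)) • H')) 0, norm_zero]
    positivity
  · -- conversions between the real and complex exponentials
    have hconv : ∀ (K : E →L[ℂ] E) (s : ℝ),
        exp (s • (Complex.I • K)) = exp ((Complex.I * (s : ℂ)) • K) := by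
      intro K s
      congr 1
      rw [smul_comm, ← Complex.coe_smul, smul_smul]
    have norm1 : ∀ (K : E →L[ℂ] E), IsSelfAdjoint K → ∀ s : ℝ,
        ‖exp ((Complex.I * (s : ℂ)) • K)‖ = 1 := by
      intro K hK s
      have hmem : (Complex.I * (s : ℂ)) • K ∈ skewAdjoint (E →L[ℂ] E) := by
        rw [skewAdjoint.mem_iff, star_smul, hK.star_eq]
        simp [Complex.star_def, map_mul, Complex.conj_I, Complex.conj_ofReal, neg_smul]
      let +nondep : NormedAlgebra ℚ (E →L[ℂ] E) := .restrictScalars ℚ ℂ _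
      exact CStarRing.norm_of_mem_unitary (exp_mem_unitary_of_mem_skewAdjoint hmem)
    set B : E →L[ℂ] E := Complex.I • H with hBdef
    set B' : E →L[ℂ] E := Complex.I • H' with hB'def
    have hB : ∀ s : ℝ, ‖exp (s • B)‖ ≤ 1 := fun s => by
      rw [hBdef, hconv]; exact (norm1 H hH s).le
    have hB' : ∀ s : ℝ, ‖exp (s • B')‖ ≤ 1 := fun s => by
      rw [hB'def, hconv]; exact (norm1 H' hH' s).le
    have hBB' : ‖B - B'‖ = ‖H - H'‖ := by
      rw [hBdef, hB'def, ← smul_sub, norm_smul, Complex.norm_I, one_mul]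
    have hXdiff : ‖exp ((Complex.I * (t : ℂ)) • H) - exp ((Complex.I * (t : ℂ)) • H')‖ ≤
        |t| * ‖H - H'‖ := by
      rw [← hconv, ← hconv, ← hBB']
      exact exp_smul_sub_exp_smul_norm_le B B' hB hB' t
    have hYdiff : ‖exp (-(Complex.I * (t : ℂ)) • H) - exp (-(Complex.I * (t : ℂ)) • H')‖ ≤
        |t| * ‖H - H'‖ := by
      have hneg : ∀ K : E →L[ℂ] E,
          (-(Complex.I * (t : ℂ))) • K = (Complex.I * ((-t : ℝ) : ℂ)) • K := by
        intro K; congr 1; push_cast; ring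
      rw [hneg H, hneg H', ← hconv, ← hconv, ← hBB']
      have := exp_smul_sub_exp_smul_norm_le B B' hB hB' (-t)
      rwa [abs_neg] at this
    set X := exp ((Complex.I * (t : ℂ)) • H)
    set X' := exp ((Complex.I * (t : ℂ)) • H')
    set Y := exp (-(Complex.I * (t : ℂ)) • H)
    set Y' := exp (-(Complex.I * (t : ℂ)) • H')
    have hXn : ‖X‖ = 1 := norm1 H hH t
    have hY'n : ‖Y'‖ = 1 := by
      have hneg : (-(Complex.I * (t : ℂ))) • H' = (Complex.I * ((-t : ℝ) : ℂ)) • H' := by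
        congr 1; push_cast; ring
      rw [show Y' = exp ((Complex.I * ((-t : ℝ) : ℂ)) • H') by rw [← hneg]]
      exact norm1 H' hH' (-t)
    have decomp : X * A * Y - X' * A * Y' = X * A * (Y - Y') + (X - X') * (A * Y') := by
      noncomm_ring
    calc ‖X * A * Y - X' * A * Y'‖
        = ‖X * A * (Y - Y') + (X - X') * (A * Y')‖ := by rw [decomp]
      _ ≤ ‖X * A * (Y - Y')‖ + ‖(X - X') * (A * Y')‖ := norm_add_le _ _
      _ ≤ ‖X‖ * ‖A‖ * ‖Y - Y'‖ + ‖X - X'‖ * (‖A‖ * ‖Y'‖) :=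
          add_le_add
            (le_trans (norm_mul_le _ _)
              (mul_le_mul_of_nonneg_right (norm_mul_le _ _) (norm_nonneg _)))
            (le_trans (norm_mul_le _ _)
              (mul_le_mul_of_nonneg_left (norm_mul_le _ _) (norm_nonneg _)))
      _ = ‖A‖ * ‖Y - Y'‖ + ‖X - X'‖ * ‖A‖ := by rw [hXn, hY'n]; ring
      _ ≤ ‖A‖ * (|t| * ‖H - H'‖) + (|t| * ‖H - H'‖) * ‖A‖ := by
          exact add_le_add (mul_le_mul_of_nonneg_left hYdiff (norm_nonneg _))
            (mul_le_mul_of_nonneg_right hXdiff (norm_nonneg _))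
      _ = 2 * |t| * ‖A‖ * ‖H - H'‖ := by ring
end

section
/- Commutator Lieb-Robinson bound for commuting interactions: if Ψ is a commuting interaction on a finite graph Λ with ‖Ψ‖_F < ∞, then for all disjoint X, Y ⊆ Λ and A ∈ A_X, B ∈ A_Y: ‖[τ_t^Λ(A), B]‖ ≤ 4‖Ψ‖_F · ‖A‖·‖B‖·|t| · Σ_{x∈X}Σ_{y∈Y} F(d(x,y)). -/
/-!
Split `H = K + L + R`, where `K` collects the terms meeting both `X` and `Y`, `L` those meeting
`X` but not `Y`, and `R` those disjoint from `X`. Since the terms commute, `e^{itH}` factors, and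
`τ_t(A) = e^{itK} A' e^{-itK}` with `A' = e^{itL} A e^{-itL}`: the `R`-part drops out because `R`
commutes with `A`, and `A'` still commutes with `B` because `L` does. Hence
`‖[τ_t(A), B]‖ ≤ 2‖B‖ ‖e^{itK} A' e^{-itK} - A'‖ ≤ 2‖B‖ |t| ‖[K, A']‖ ≤ 4 |t| ‖K‖ ‖A‖ ‖B‖`,
and `‖K‖` is bounded by summing `‖Ψ(Z)‖` over the pairs `x ∈ X ∩ Z`, `y ∈ Y ∩ Z`.
-/

noncomputable section

/-- The algebra of bounded operators on the Hilbert space `⊗_{x ∈ Λ} ℂ^q`, realized as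
`EuclideanSpace ℂ (Λ → Fin q)` (tensor basis indexed by spin configurations). -/
abbrev LatticeOp (Λ : Type*) [Fintype Λ] [DecidableEq Λ] (q : ℕ) :=
  EuclideanSpace ℂ (Λ → Fin q) →L[ℂ] EuclideanSpace ℂ (Λ → Fin q)

variable {Λ : Type*} [Fintype Λ] [DecidableEq Λ] {q : ℕ}

/-- Matrix entry of an operator in the tensor-product (configuration) basis. -/
def entry (A : LatticeOp Λ q) (f g : Λ → Fin q) : ℂ :=
  @inner ℂ _ _ (EuclideanSpace.single f (1 : ℂ)) (A (EuclideanSpace.single g (1 : ℂ)))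

/-- `A ∈ 𝒜_X`: the operator `A` acts as `A' ⊗ 1` for an operator `A'` on `⊗_{x ∈ X} ℂ^q`,
i.e. its matrix elements are diagonal outside `X` and depend only on the restriction to `X`. -/
def IsSupportedOn (X : Finset Λ) (A : LatticeOp Λ q) : Prop :=
  ∃ M : (Λ → Fin q) → (Λ → Fin q) → ℂ,
    (∀ f g f' g' : Λ → Fin q, (∀ i ∈ X, f i = f' i) → (∀ i ∈ X, g i = g' i) → M f g = M f' g') ∧
    ∀ f g : Λ → Fin q, entry A f g = if ∀ i ∉ X, f i = g i then M f g else 0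

/-- Heisenberg evolution `τ_t(A) = e^{itH} A e^{-itH}`. -/
def heis (H : LatticeOp Λ q) (t : ℝ) (A : LatticeOp Λ q) : LatticeOp Λ q :=
  NormedSpace.exp ((Complex.I * (t : ℂ)) • H) * A *
    NormedSpace.exp (-(Complex.I * (t : ℂ)) • H)

/-- The Hamiltonian `H_Λ = Σ_{Z ⊆ Λ} Ψ(Z)`. -/
def hamiltonian (Ψ : Finset Λ → LatticeOp Λ q) : LatticeOp Λ q :=
  ∑ Z : Finset Λ, Ψ Z

/-- An interaction: each `Ψ(Z)` is self-adjoint and supported in `Z`. -/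
def IsInteraction (Ψ : Finset Λ → LatticeOp Λ q) : Prop :=
  ∀ Z : Finset Λ, IsSelfAdjoint (Ψ Z) ∧ IsSupportedOn Z (Ψ Z)

/-- A commuting interaction: all terms pairwise commute. -/
def IsCommutingInteraction (Ψ : Finset Λ → LatticeOp Λ q) : Prop :=
  IsInteraction Ψ ∧ ∀ Z Z' : Finset Λ, Commute (Ψ Z) (Ψ Z')

open NormedSpace Finset

section ConjExp

variable {E : Type*} [CStarAlgebra E]

def conjExp (c : ℂ) (H A : E) : E :=
  exp (c • H) * A * exp (-c • H)

lemma exp_smul_mul_exp_neg_smul (c : ℂ) (H : E) : exp (c • H) * exp (-c • H) = 1 := by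
  let : NormedAlgebra ℚ E := .restrictScalars ℚ ℂ E
  rw [← exp_add_of_commute ((Commute.refl H).smul_left c |>.smul_right _), ← add_smul,
    add_neg_cancel, zero_smul, exp_zero]

lemma conjExp_add_of_commute {X Y : E} (h : Commute X Y) (c : ℂ) (A : E) :
    conjExp c (X + Y) A = conjExp c X (conjExp c Y A) := by
  let : NormedAlgebra ℚ E := .restrictScalars ℚ ℂ E
  simp only [conjExp, smul_add]
  rw [add_comm (-c • X), exp_add_of_commute ((h.smul_left c).smul_right c),
    exp_add_of_commute ((h.symm.smul_left _).smul_right _)]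
  noncomm_ring

lemma conjExp_eq_self_of_commute {H A : E} (h : Commute H A) (c : ℂ) : conjExp c H A = A := by
  rw [conjExp, ((h.smul_left c).exp_left).eq, mul_assoc, exp_smul_mul_exp_neg_smul, mul_one]

lemma Commute.conjExp_left {H A B : E} (hAB : Commute A B) (hHB : Commute H B) (c : ℂ) :
    Commute (conjExp c H A) B :=
  (((hHB.smul_left c).exp_left).mul_left hAB).mul_left (hHB.smul_left _).exp_left

lemma exp_smul_mem_unitary {H : E} (hH : IsSelfAdjoint H) {c : ℂ} (hc : c ∈ skewAdjoint ℂ) :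
    exp (c • H) ∈ unitary E :=
  let : NormedAlgebra ℚ E := .restrictScalars ℚ ℂ E
  exp_mem_unitary_of_mem_skewAdjoint (hH.smul_mem_skewAdjoint hc)

lemma norm_conjExp {H : E} (hH : IsSelfAdjoint H) {c : ℂ} (hc : c ∈ skewAdjoint ℂ) (A : E) :
    ‖conjExp c H A‖ = ‖A‖ := by
  rw [conjExp, CStarRing.norm_mul_mem_unitary _ (exp_smul_mem_unitary hH (neg_mem hc)),
    CStarRing.norm_mem_unitary_mul _ (exp_smul_mem_unitary hH hc)]

lemma I_mul_ofReal_mem_skewAdjoint (t : ℝ) : Complex.I * t ∈ skewAdjoint ℂ := by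
  simp [skewAdjoint.mem_iff]

/-- Mean value inequality: `s ↦ conjExp (I * s) H A` has derivative
`conjExp (I * s) H (I • (H * A - A * H))`, whose norm is constant. -/
lemma norm_conjExp_sub_le {H : E} (hH : IsSelfAdjoint H) (A : E) (t : ℝ) :
    ‖conjExp (Complex.I * t) H A - A‖ ≤ |t| * ‖H * A - A * H‖ := by
  obtain ⟨G, hG⟩ : ∃ G : E, Complex.I • H = G := ⟨_, rfl⟩
  have hsmul : ∀ s : ℝ, (Complex.I * s) • H = s • G := fun s => by
    rw [← hG, ← Complex.coe_smul, smul_smul, mul_comm]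
  have hf : (fun s : ℝ => conjExp (Complex.I * s) H A) =
      fun s => exp (s • G) * A * exp (s • -G) := by
    funext s
    rw [conjExp, neg_smul, hsmul, smul_neg]
  have hderiv : ∀ s : ℝ, HasDerivAt (fun s : ℝ => conjExp (Complex.I * s) H A)
      (conjExp (Complex.I * s) H (Complex.I • (H * A - A * H))) s := fun s => by
    rw [hf]
    refine (((hasDerivAt_exp_smul_const G s).mul_const A).mul
      (hasDerivAt_exp_smul_const' (-G) s)).congr_deriv ?_
    rw [conjExp, neg_smul, hsmul, smul_neg, smul_sub, ← smul_mul_assoc, ← mul_smul_comm, hG]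
    noncomm_ring
  have hbound : ∀ s : ℝ, ‖conjExp (Complex.I * s) H (Complex.I • (H * A - A * H))‖ =
      ‖H * A - A * H‖ := fun s => by
    rw [norm_conjExp hH (I_mul_ofReal_mem_skewAdjoint s), norm_smul, Complex.norm_I, one_mul]
  have := Convex.norm_image_sub_le_of_norm_hasDerivWithin_le
    (fun s _ => (hderiv s).hasDerivWithinAt) (fun s _ => (hbound s).le) convex_univ
    (Set.mem_univ 0) (Set.mem_univ t)
  simpa [conjExp, mul_comm, Real.norm_eq_abs] using this

lemma norm_mul_sub_mul_le (a b : E) : ‖a * b - b * a‖ ≤ 2 * ‖a‖ * ‖b‖ := by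
  calc ‖a * b - b * a‖ ≤ ‖a‖ * ‖b‖ + ‖b‖ * ‖a‖ :=
        (norm_sub_le _ _).trans (add_le_add (norm_mul_le _ _) (norm_mul_le _ _))
    _ = 2 * ‖a‖ * ‖b‖ := by ring

lemma norm_mul_sub_mul_le_of_commute {a a' b : E} (h : Commute a' b) :
    ‖a * b - b * a‖ ≤ 2 * ‖b‖ * ‖a - a'‖ := by
  have : a * b - b * a = (a - a') * b - b * (a - a') := by
    rw [sub_mul, mul_sub, h.eq]; abel
  rw [this]
  exact (norm_mul_sub_mul_le _ _).trans_eq (by ring)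

theorem norm_conjExp_commutator_le {K L R A B : E} (hK : IsSelfAdjoint K) (hL : IsSelfAdjoint L)
    (hKL : Commute K L) (hKR : Commute K R) (hLR : Commute L R) (hRA : Commute R A)
    (hLB : Commute L B) (hAB : Commute A B) (t : ℝ) :
    ‖conjExp (Complex.I * t) (K + L + R) A * B - B * conjExp (Complex.I * t) (K + L + R) A‖ ≤
      4 * ‖K‖ * ‖A‖ * ‖B‖ * |t| := by
  set A' := conjExp (Complex.I * t) L A
  have hsplit : conjExp (Complex.I * t) (K + L + R) A = conjExp (Complex.I * t) K A' := by
    rw [conjExp_add_of_commute (hKR.add_left hLR), conjExp_eq_self_of_commute hRA,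
      conjExp_add_of_commute hKL]
  have hA' : ‖A'‖ = ‖A‖ := norm_conjExp hL (I_mul_ofReal_mem_skewAdjoint t) A
  calc _ ≤ 2 * ‖B‖ * ‖conjExp (Complex.I * t) K A' - A'‖ :=
        hsplit ▸ norm_mul_sub_mul_le_of_commute (hAB.conjExp_left hLB _)
    _ ≤ 2 * ‖B‖ * (|t| * (2 * ‖K‖ * ‖A'‖)) := by
        gcongr
        exact (norm_conjExp_sub_le hK A' t).trans (by gcongr; exact norm_mul_sub_mul_le K A')
    _ = 4 * ‖K‖ * ‖A‖ * ‖B‖ * |t| := by rw [hA']; ring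

end ConjExp

lemma entry_eq_apply (A : LatticeOp Λ q) (f g : Λ → Fin q) :
    entry A f g = A (EuclideanSpace.single g 1) f := by
  simp [entry, EuclideanSpace.inner_single_left]

lemma ext_entry {A B : LatticeOp Λ q} (h : ∀ f g, entry A f g = entry B f g) : A = B := by
  refine ContinuousLinearMap.coe_injective ((EuclideanSpace.basisFun _ ℂ).toBasis.ext fun g => ?_)
  ext f
  simpa [entry_eq_apply] using h f g

lemma entry_mul (A C : LatticeOp Λ q) (f g : Λ → Fin q) :
    entry (A * C) f g = ∑ h, entry A f h * entry C h g := by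
  conv_lhs => rw [entry_eq_apply, mul_apply_eq_comp,
    ← (EuclideanSpace.basisFun _ ℂ).sum_repr (C _)]
  simp [entry_eq_apply, mul_comm]

/-- Entry `(f, g)` of the product of operators supported on disjoint `X` and `Z`: only the
configuration equal to `g` on `X` and to `f` off `X` contributes, and the result is symmetric in
the two factors. -/
lemma sum_ite_mul_ite_of_disjoint {X Z : Finset Λ} (hXZ : Disjoint X Z)
    {M P : (Λ → Fin q) → (Λ → Fin q) → ℂ}
    (hM : ∀ f g f' g' : Λ → Fin q, (∀ i ∈ X, f i = f' i) → (∀ i ∈ X, g i = g' i) → M f g = M f' g')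
    (hP : ∀ f g f' g' : Λ → Fin q, (∀ i ∈ Z, f i = f' i) → (∀ i ∈ Z, g i = g' i) → P f g = P f' g')
    (f g : Λ → Fin q) :
    ∑ h, (if ∀ i ∉ X, f i = h i then M f h else 0) * (if ∀ i ∉ Z, h i = g i then P h g else 0) =
      if ∀ i ∉ X, i ∉ Z → f i = g i then M f g * P f g else 0 := by
  set h₀ := X.piecewise g f
  have hX : ∀ i ∈ X, h₀ i = g i := fun i hi => X.piecewise_eq_of_mem _ _ hi
  have hXc : ∀ i ∉ X, h₀ i = f i := fun i hi => X.piecewise_eq_of_notMem _ _ hi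
  have hsupp : ∀ h, ((∀ i ∉ X, f i = h i) ∧ ∀ i ∉ Z, h i = g i) ↔
      ((∀ i ∉ X, i ∉ Z → f i = g i) ∧ h = h₀) := by
    refine fun h => ⟨fun ⟨hf, hg⟩ =>
      ⟨fun i hiX hiZ => (hf i hiX).trans (hg i hiZ), funext fun i => ?_⟩, ?_⟩
    · by_cases hi : i ∈ X
      · rw [hX i hi, hg i (disjoint_left.1 hXZ hi)]
      · rw [hXc i hi, hf i hi]
    · rintro ⟨hfg, rfl⟩
      refine ⟨fun i hi => (hXc i hi).symm, fun i hiZ => ?_⟩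
      by_cases hi : i ∈ X
      · exact hX i hi
      · rw [hXc i hi, hfg i hi hiZ]
  have hMh₀ : M f h₀ = M f g := hM _ _ _ _ (fun _ _ => rfl) hX
  have hPh₀ : P h₀ g = P f g :=
    hP _ _ _ _ (fun i hi => hXc i (disjoint_right.1 hXZ hi)) (fun _ _ => rfl)
  simp_rw [ite_zero_mul_ite_zero, hsupp, ite_and, sum_ite_irrel, sum_ite_eq',
    mem_univ, if_true, hMh₀, hPh₀, sum_const_zero]

theorem IsSupportedOn.commute {X Z : Finset Λ} {A C : LatticeOp Λ q} (hA : IsSupportedOn X A)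
    (hC : IsSupportedOn Z C) (hXZ : Disjoint X Z) : Commute A C := by
  obtain ⟨M, hM, hAM⟩ := hA
  obtain ⟨P, hP, hCP⟩ := hC
  refine ext_entry fun f g => ?_
  simp only [entry_mul, hAM, hCP]
  rw [sum_ite_mul_ite_of_disjoint hXZ hM hP, sum_ite_mul_ite_of_disjoint hXZ.symm hP hM]
  simp only [mul_comm (M f g), forall_comm (α := _ ∉ X)]

lemma IsInteraction.isSelfAdjoint_sum {Ψ : Finset Λ → LatticeOp Λ q} (hΨ : IsInteraction Ψ)
    (s : Finset (Finset Λ)) : IsSelfAdjoint (∑ Z ∈ s, Ψ Z) :=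
  _root_.isSelfAdjoint_sum (R := LatticeOp Λ q) s fun Z _ => (hΨ Z).1

lemma IsInteraction.commute_sum {Ψ : Finset Λ → LatticeOp Λ q} (hΨ : IsInteraction Ψ)
    {X : Finset Λ} {A : LatticeOp Λ q} (hA : IsSupportedOn X A) {s : Finset (Finset Λ)}
    (hs : ∀ Z ∈ s, Disjoint Z X) : Commute (∑ Z ∈ s, Ψ Z) A :=
  Commute.sum_left _ _ _ fun Z hZ => (hΨ Z).2.commute hA (hs Z hZ)

lemma IsCommutingInteraction.commute_sum_sum {Ψ : Finset Λ → LatticeOp Λ q}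
    (hΨ : IsCommutingInteraction Ψ) (s u : Finset (Finset Λ)) :
    Commute (∑ Z ∈ s, Ψ Z) (∑ Z ∈ u, Ψ Z) :=
  Commute.sum_left _ _ _ fun Z _ => Commute.sum_right _ _ _ fun Z' _ => hΨ.2 Z Z'

lemma sum_le_sum_sum_sum_filter_mem {w : Finset Λ → ℝ} (hw : ∀ Z, 0 ≤ w Z) {X Y : Finset Λ}
    {s : Finset (Finset Λ)} (hs : ∀ Z ∈ s, ¬Disjoint Z X ∧ ¬Disjoint Z Y) :
    ∑ Z ∈ s, w Z ≤ ∑ x ∈ X, ∑ y ∈ Y, ∑ Z ∈ univ.filter (fun Z => x ∈ Z ∧ y ∈ Z), w Z := by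
  have hnonneg : ∀ Z (p : Λ × Λ), 0 ≤ if p.1 ∈ Z ∧ p.2 ∈ Z then w Z else 0 :=
    fun Z _ => ite_nonneg (hw Z) le_rfl
  calc ∑ Z ∈ s, w Z ≤ ∑ Z ∈ s, ∑ p ∈ X ×ˢ Y, if p.1 ∈ Z ∧ p.2 ∈ Z then w Z else 0 := by
        refine sum_le_sum fun Z hZ => ?_
        obtain ⟨x, hxZ, hxX⟩ := not_disjoint_iff.1 (hs Z hZ).1
        obtain ⟨y, hyZ, hyY⟩ := not_disjoint_iff.1 (hs Z hZ).2
        calc w Z = if (x, y).1 ∈ Z ∧ (x, y).2 ∈ Z then w Z else 0 := (if_pos ⟨hxZ, hyZ⟩).symm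
          _ ≤ _ := single_le_sum (fun p _ => hnonneg Z p) (mem_product.2 ⟨hxX, hyY⟩)
    _ ≤ ∑ Z, ∑ p ∈ X ×ˢ Y, if p.1 ∈ Z ∧ p.2 ∈ Z then w Z else 0 :=
        sum_le_sum_of_subset_of_nonneg (subset_univ s) fun Z _ _ =>
          sum_nonneg fun p _ => hnonneg Z p
    _ = _ := by
        rw [sum_comm, sum_product]
        simp only [sum_filter]

lemma norm_sum_le_sum_sum_of_not_disjoint [MetricSpace Λ] {Ψ : Finset Λ → LatticeOp Λ q}
    {F : ℝ → ℝ} {N : ℝ}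
    (hN : ∀ x y : Λ, ∑ Z ∈ univ.filter (fun Z => x ∈ Z ∧ y ∈ Z), ‖Ψ Z‖ ≤ N * F (dist x y))
    {X Y : Finset Λ} {s : Finset (Finset Λ)} (hs : ∀ Z ∈ s, ¬Disjoint Z X ∧ ¬Disjoint Z Y) :
    ‖∑ Z ∈ s, Ψ Z‖ ≤ N * ∑ x ∈ X, ∑ y ∈ Y, F (dist x y) :=
  calc ‖∑ Z ∈ s, Ψ Z‖ ≤ ∑ Z ∈ s, ‖Ψ Z‖ := norm_sum_le _ _
    _ ≤ ∑ x ∈ X, ∑ y ∈ Y, ∑ Z ∈ univ.filter (fun Z => x ∈ Z ∧ y ∈ Z), ‖Ψ Z‖ :=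
        sum_le_sum_sum_sum_filter_mem (fun Z => norm_nonneg _) hs
    _ ≤ N * ∑ x ∈ X, ∑ y ∈ Y, F (dist x y) := by
        simp only [mul_sum]
        exact sum_le_sum fun x _ => sum_le_sum fun y _ => hN x y

theorem commutator_lrb_commuting_general [MetricSpace Λ]
    (Ψ : Finset Λ → LatticeOp Λ q) (hΨ : IsCommutingInteraction Ψ)
    (F : ℝ → ℝ) (N : ℝ)
    (hN : ∀ x y : Λ,
      ∑ Z ∈ Finset.univ.filter (fun Z : Finset Λ => x ∈ Z ∧ y ∈ Z), ‖Ψ Z‖ ≤ N * F (dist x y))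
    (X Y : Finset Λ) (hXY : Disjoint X Y)
    (A B : LatticeOp Λ q) (hA : IsSupportedOn X A) (hB : IsSupportedOn Y B) (t : ℝ) :
    ‖heis (hamiltonian Ψ) t A * B - B * heis (hamiltonian Ψ) t A‖ ≤
      4 * N * ‖A‖ * ‖B‖ * |t| * ∑ x ∈ X, ∑ y ∈ Y, F (dist x y) := by
  set meetsX := univ.filter fun Z : Finset Λ => ¬Disjoint Z X
  set K := ∑ Z ∈ meetsX.filter fun Z => ¬Disjoint Z Y, Ψ Z
  set L := ∑ Z ∈ meetsX.filter fun Z => Disjoint Z Y, Ψ Z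
  set R := ∑ Z ∈ univ.filter fun Z : Finset Λ => Disjoint Z X, Ψ Z
  have hH : hamiltonian Ψ = K + L + R := by
    rw [hamiltonian, ← sum_filter_add_sum_filter_not univ (fun Z => Disjoint Z X),
      ← sum_filter_add_sum_filter_not meetsX (fun Z => Disjoint Z Y)]
    abel
  have hK : ‖K‖ ≤ N * ∑ x ∈ X, ∑ y ∈ Y, F (dist x y) :=
    norm_sum_le_sum_sum_of_not_disjoint hN fun Z hZ => by simpa [meetsX] using hZ
  calc _ = ‖conjExp (Complex.I * t) (K + L + R) A * B -
          B * conjExp (Complex.I * t) (K + L + R) A‖ := by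
        rw [← hH]; rfl
    _ ≤ 4 * ‖K‖ * ‖A‖ * ‖B‖ * |t| :=
        norm_conjExp_commutator_le (hΨ.1.isSelfAdjoint_sum _) (hΨ.1.isSelfAdjoint_sum _)
          (hΨ.commute_sum_sum _ _) (hΨ.commute_sum_sum _ _) (hΨ.commute_sum_sum _ _)
          (hΨ.1.commute_sum hA fun Z hZ => (mem_filter.1 hZ).2)
          (hΨ.1.commute_sum hB fun Z hZ => (mem_filter.1 hZ).2) (hA.commute hB hXY) t
    _ ≤ 4 * (N * ∑ x ∈ X, ∑ y ∈ Y, F (dist x y)) * ‖A‖ * ‖B‖ * |t| := by gcongr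
    _ = _ := by ring

/-- Commutator Lieb-Robinson bound for commuting interactions: if `‖Ψ‖_F ≤ N` (with `F > 0`),
then for disjoint `X, Y` and `A ∈ 𝒜_X`, `B ∈ 𝒜_Y`,
`‖[τ_t^Λ(A), B]‖ ≤ 4 N ‖A‖ ‖B‖ |t| Σ_{x∈X} Σ_{y∈Y} F(d(x,y))`. -/
theorem commutator_lrb_commuting [MetricSpace Λ]
    (Ψ : Finset Λ → LatticeOp Λ q) (hΨ : IsCommutingInteraction Ψ)
    (F : ℝ → ℝ) (hF : ∀ r, 0 < F r) (N : ℝ)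
    (hN : ∀ x y : Λ,
      ∑ Z ∈ Finset.univ.filter (fun Z : Finset Λ => x ∈ Z ∧ y ∈ Z), ‖Ψ Z‖ ≤ N * F (dist x y))
    (X Y : Finset Λ) (hXY : Disjoint X Y)
    (A B : LatticeOp Λ q) (hA : IsSupportedOn X A) (hB : IsSupportedOn Y B) (t : ℝ) :
    ‖heis (hamiltonian Ψ) t A * B - B * heis (hamiltonian Ψ) t A‖ ≤
      4 * N * ‖A‖ * ‖B‖ * |t| * ∑ x ∈ X, ∑ y ∈ Y, F (dist x y) :=
  commutator_lrb_commuting_general Ψ hΨ F N hN X Y hXY A B hA hB t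
end
end

section
/- Sharpness example (two sites): on ℂ^2 ⊗ ℂ^2 with Hamiltonian H = c·σ^z_x σ^z_y (c ∈ ℝ), observables A = σ^x_x and B = |↑⟩⟨↓|_y + |↓⟩⟨↑|_y, one has ‖[e^{itH} A e^{−itH}, B]‖ ≥ 2|sin(2tc)|. -/
open Kronecker

noncomputable section

/-- Pauli `x` matrix. -/
def pauliX : Matrix (Fin 2) (Fin 2) ℂ := !![0, 1; 1, 0]

/-- Pauli `z` matrix. -/
def pauliZ : Matrix (Fin 2) (Fin 2) ℂ := !![1, 0; 0, -1]

/-- `σ^z_x σ^z_y` on `ℂ² ⊗ ℂ²`, as an operator on `EuclideanSpace ℂ (Fin 2 × Fin 2)`. -/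
def ZZ : EuclideanSpace ℂ (Fin 2 × Fin 2) →L[ℂ] EuclideanSpace ℂ (Fin 2 × Fin 2) :=
  Matrix.toEuclideanCLM (𝕜 := ℂ) (pauliZ ⊗ₖ pauliZ)

/-- `A = σ^x_x`, acting on the first tensor factor. -/
def Aop : EuclideanSpace ℂ (Fin 2 × Fin 2) →L[ℂ] EuclideanSpace ℂ (Fin 2 × Fin 2) :=
  Matrix.toEuclideanCLM (𝕜 := ℂ) (pauliX ⊗ₖ (1 : Matrix (Fin 2) (Fin 2) ℂ))

/-- `B = |↑⟩⟨↓|_y + |↓⟩⟨↑|_y = σ^x_y`, acting on the second tensor factor. -/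
def Bop : EuclideanSpace ℂ (Fin 2 × Fin 2) →L[ℂ] EuclideanSpace ℂ (Fin 2 × Fin 2) :=
  Matrix.toEuclideanCLM (𝕜 := ℂ) ((1 : Matrix (Fin 2) (Fin 2) ℂ) ⊗ₖ pauliX)

/-! The product basis vectors are eigenvectors of `σ^z_x σ^z_y`, so `e^{±itH}` acts on them by
phases, while `A` and `B` flip one factor each. Applied to `|↑↑⟩`, the two products in the
commutator both end at `|↓↓⟩`, with phases `e^{2itc}` and `e^{-2itc}`; hence the commutator maps
this unit vector to `2i sin(2tc) |↓↓⟩`. -/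

theorem NormedSpace.exp_apply_of_apply_eq_smul {𝕂 E : Type*} [RCLike 𝕂] [NormedAddCommGroup E]
    [NormedSpace 𝕂 E] [CompleteSpace E] (T : E →L[𝕂] E) {x : E} {μ : 𝕂} (h : T x = μ • x) :
    NormedSpace.exp T x = NormedSpace.exp μ • x := by
  have hpow (n : ℕ) : (T ^ n) x = μ ^ n • x := by
    induction n with
    | zero => simp
    | succ n ih => rw [pow_succ, mul_apply_eq_comp, h, map_smul, ih, smul_smul, pow_succ']
  have hT := (NormedSpace.exp_series_hasSum_exp' (𝕂 := 𝕂) T).mapL (ContinuousLinearMap.apply 𝕂 E x)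
  have hμ := (NormedSpace.exp_series_hasSum_exp' (𝕂 := 𝕂) μ).smul_const x
  refine hT.unique ?_
  simpa [hpow, smul_smul] using hμ

theorem Matrix.toEuclideanCLM_kronecker_single_one {m n 𝕜 : Type*} [RCLike 𝕜] [Fintype m]
    [Fintype n] [DecidableEq m] [DecidableEq n] (P : Matrix m m 𝕜) (Q : Matrix n n 𝕜) (a : m)
    (b : n) :
    Matrix.toEuclideanCLM (𝕜 := 𝕜) (P ⊗ₖ Q) (EuclideanSpace.single (a, b) 1) =
      WithLp.toLp 2 (fun ij => P ij.1 a * Q ij.2 b) := by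
  change Matrix.toEuclideanCLM (𝕜 := 𝕜) (P ⊗ₖ Q) (WithLp.toLp 2 (Pi.single (a, b) 1)) = _
  rw [Matrix.toEuclideanCLM_toLp, Matrix.mulVec_single_one]
  rfl

/-- `ket a b = |a⟩ ⊗ |b⟩`, where `0` stands for `↑` and `1` for `↓`. -/
abbrev ket (a b : Fin 2) : EuclideanSpace ℂ (Fin 2 × Fin 2) := EuclideanSpace.single (a, b) 1

theorem norm_ket (a b : Fin 2) : ‖ket a b‖ = 1 := by
  rw [PiLp.norm_single, norm_one]

theorem ZZ_ket (a b : Fin 2) : ZZ (ket a b) = ((-1) ^ (a.val + b.val) : ℂ) • ket a b := by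
  ext ⟨i, j⟩
  rw [ZZ, Matrix.toEuclideanCLM_kronecker_single_one]
  fin_cases a <;> fin_cases b <;> fin_cases i <;> fin_cases j <;> simp [pauliZ]

theorem Aop_ket (a b : Fin 2) : Aop (ket a b) = ket (1 - a) b := by
  ext ⟨i, j⟩
  rw [Aop, Matrix.toEuclideanCLM_kronecker_single_one]
  fin_cases a <;> fin_cases b <;> fin_cases i <;> fin_cases j <;> simp [pauliX]

theorem Bop_ket (a b : Fin 2) : Bop (ket a b) = ket a (1 - b) := by
  ext ⟨i, j⟩
  rw [Bop, Matrix.toEuclideanCLM_kronecker_single_one]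
  fin_cases a <;> fin_cases b <;> fin_cases i <;> fin_cases j <;> simp [pauliX]

theorem exp_smul_ZZ_ket (s : ℂ) (a b : Fin 2) :
    NormedSpace.exp (s • ZZ) (ket a b) = Complex.exp (s * (-1) ^ (a.val + b.val)) • ket a b := by
  rw [NormedSpace.exp_apply_of_apply_eq_smul _ (by rw [smul_apply, ZZ_ket, smul_smul]),
    Complex.exp_eq_exp_ℂ]

theorem commutator_apply_ket_zero_zero (s : ℂ) :
    ((NormedSpace.exp (s • ZZ) * Aop * NormedSpace.exp ((-s) • ZZ)) * Bop -
        Bop * (NormedSpace.exp (s • ZZ) * Aop * NormedSpace.exp ((-s) • ZZ))) (ket 0 0) =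
      (Complex.exp (2 * s) - Complex.exp (-(2 * s))) • ket 1 1 := by
  simp only [sub_apply, mul_apply_eq_comp, exp_smul_ZZ_ket, map_smul, Aop_ket, Bop_ket, smul_smul,
    ← Complex.exp_add, sub_smul]
  norm_num
  ring_nf

theorem norm_exp_mul_I_sub_exp_neg_mul_I (θ : ℝ) :
    ‖Complex.exp (θ * Complex.I) - Complex.exp (-(θ * Complex.I))‖ = 2 * |Real.sin θ| := by
  rw [← Complex.two_sinh, Complex.sinh_mul_I, ← Complex.ofReal_sin, norm_mul, norm_mul,
    Complex.norm_real, Complex.norm_I, Real.norm_eq_abs, Complex.norm_two, mul_one]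


/-- Sharpness example on two sites: with `H = c σ^z_x σ^z_y`, `A = σ^x_x` and
`B = |↑⟩⟨↓|_y + |↓⟩⟨↑|_y`, one has `‖[e^{itH} A e^{-itH}, B]‖ ≥ 2 |sin(2tc)|`
for all `t, c ∈ ℝ`. -/
theorem two_site_sharpness (c t : ℝ) :
    2 * |Real.sin (2 * t * c)| ≤
      ‖(NormedSpace.exp ((Complex.I * (t : ℂ)) • ((c : ℂ) • ZZ)) * Aop *
            NormedSpace.exp (-(Complex.I * (t : ℂ)) • ((c : ℂ) • ZZ))) * Bop -
          Bop * (NormedSpace.exp ((Complex.I * (t : ℂ)) • ((c : ℂ) • ZZ)) * Aop *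
            NormedSpace.exp (-(Complex.I * (t : ℂ)) • ((c : ℂ) • ZZ)))‖ := by
  set s : ℂ := (t * c : ℝ) * Complex.I
  have hs : (Complex.I * t) • ((c : ℂ) • ZZ) = s • ZZ := by
    rw [smul_smul]; push_cast [s]; ring_nf
  have hs' : -(Complex.I * t) • ((c : ℂ) • ZZ) = (-s) • ZZ := by
    rw [smul_smul]; push_cast [s]; ring_nf
  have h2s : 2 * s = (2 * t * c : ℝ) * Complex.I := by push_cast [s]; ring
  rw [hs, hs', ← norm_exp_mul_I_sub_exp_neg_mul_I, ← h2s]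
  calc ‖Complex.exp (2 * s) - Complex.exp (-(2 * s))‖
      = ‖(Complex.exp (2 * s) - Complex.exp (-(2 * s))) • ket 1 1‖ := by
        rw [norm_smul, norm_ket, mul_one]
    _ = ‖_‖ := by rw [commutator_apply_ket_zero_zero]
    _ ≤ _ := ContinuousLinearMap.unit_le_opNorm _ _ (norm_ket 0 0).le
end
end

section
/- Perturbed commutator bound: let H be self-adjoint with Heisenberg dynamics satisfying ‖[e^{itH}Be^{−itH}, V]‖ ≤ K·|t| for all t (for fixed bounded B, V). Then the perturbed dynamics satisfies ‖[e^{−it(H+V)} B e^{it(H+V)}, V]‖ ≤ K·|t|·(1 + ‖V‖·|t|) for all t ∈ ℝ. -/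
/-!
Interaction picture. The curve `f u = e^{-iu(H+V)} τ_{u-t}(B) e^{iu(H+V)}`, where
`τ_s(B) = e^{isH} B e^{-isH}`, runs from `τ_{-t}(B)` at `u = 0` to the perturbed evolution of `B`
at `u = t`. Its derivative is the unitary conjugate of `i [τ_{u-t}(B), V]`, of norm at most
`K |u - t|`, so `‖f t - f 0‖ ≤ K t² / 2`. Commuting with `V` costs at most `2 ‖V‖` times this
difference on top of `‖[τ_{-t}(B), V]‖ ≤ K |t|`.
-/

open NormedSpace

section BanachAlgebra

variable {𝔸 : Type*} [NormedRing 𝔸]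

noncomputable def expConj (x b : 𝔸) : 𝔸 := exp x * b * exp (-x)

@[simp]
theorem expConj_zero (b : 𝔸) : expConj 0 b = b := by
  simp [expConj]

variable [NormedAlgebra ℝ 𝔸] [CompleteSpace 𝔸]

theorem exp_smul_mul_exp_smul (x : 𝔸) (s r : ℝ) :
    exp (s • x) * exp (r • x) = exp ((s + r) • x) := by
  let : NormedAlgebra ℚ 𝔸 := .restrictScalars ℚ ℝ 𝔸
  rw [add_smul, exp_add_of_commute (((Commute.refl x).smul_left s).smul_right r)]

theorem expConj_smul_expConj_smul (x b : 𝔸) (s r : ℝ) :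
    expConj (s • x) (expConj (r • x) b) = expConj ((s + r) • x) b := by
  simp only [expConj, ← neg_smul, ← mul_assoc, exp_smul_mul_exp_smul]
  rw [mul_assoc, exp_smul_mul_exp_smul, ← neg_add_rev]

theorem hasDerivAt_expConj (x : 𝔸) {m : ℝ → 𝔸} {m' : 𝔸} {s : ℝ} (hm : HasDerivAt m m' s) :
    HasDerivAt (fun u : ℝ => expConj (u • x) (m u))
      (expConj (s • x) (x * m s - m s * x + m')) s := by
  have hexp := hasDerivAt_exp_smul_const' (𝕂 := ℝ) x s
  have hexp_neg := hasDerivAt_exp_smul_const' (𝕂 := ℝ) (-x) s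
  simp only [smul_neg] at hexp_neg
  have hx : Commute x (exp (s • x)) := ((Commute.refl x).smul_right s).exp_right
  refine ((hexp.mul hm).mul hexp_neg).congr_deriv ?_
  simp only [expConj, Pi.mul_apply, hx.eq]
  noncomm_ring

theorem hasDerivAt_expConj_const (x b : 𝔸) (s : ℝ) :
    HasDerivAt (fun u : ℝ => expConj (u • x) b)
      (x * expConj (s • x) b - expConj (s • x) b * x) s := by
  have hx : Commute x (exp (s • x)) := ((Commute.refl x).smul_right s).exp_right
  have hx_neg : Commute x (exp (-(s • x))) := ((Commute.refl x).smul_right s).neg_right.exp_right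
  convert hasDerivAt_expConj x (hasDerivAt_const s b) using 1
  simp only [expConj, add_zero, mul_sub, sub_mul, ← mul_assoc, hx.eq]
  simp only [mul_assoc, hx_neg.eq]

end BanachAlgebra

theorem norm_expConj_of_mem_skewAdjoint {𝔸 : Type*} [NormedRing 𝔸] [StarRing 𝔸] [CStarRing 𝔸]
    [NormedAlgebra ℝ 𝔸] [CompleteSpace 𝔸] {x : 𝔸} (hx : x ∈ skewAdjoint 𝔸) (b : 𝔸) :
    ‖expConj x b‖ = ‖b‖ := by
  let : NormedAlgebra ℚ 𝔸 := .restrictScalars ℚ ℝ 𝔸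
  rw [expConj,
    CStarRing.norm_mul_coe_unitary _ ⟨_, exp_mem_unitary_of_mem_skewAdjoint (neg_mem hx)⟩,
    CStarRing.norm_coe_unitary_mul ⟨_, exp_mem_unitary_of_mem_skewAdjoint hx⟩]

theorem norm_commutator_le {R : Type*} [NormedRing R] (a b v : R) :
    ‖a * v - v * a‖ ≤ ‖b * v - v * b‖ + 2 * ‖v‖ * ‖a - b‖ := by
  have hsplit : a * v - v * a = (b * v - v * b) + ((a - b) * v - v * (a - b)) := by noncomm_ring
  calc ‖a * v - v * a‖ ≤ ‖b * v - v * b‖ + (‖(a - b) * v‖ + ‖v * (a - b)‖) := by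
        rw [hsplit]; exact (norm_add_le _ _).trans (by gcongr; exact norm_sub_le _ _)
    _ ≤ ‖b * v - v * b‖ + (‖a - b‖ * ‖v‖ + ‖v‖ * ‖a - b‖) := by
        gcongr <;> exact norm_mul_le _ _
    _ = ‖b * v - v * b‖ + 2 * ‖v‖ * ‖a - b‖ := by ring

theorem norm_sub_le_of_norm_deriv_le_mul_abs_sub {E : Type*} [NormedAddCommGroup E]
    [NormedSpace ℝ E] {f f' : ℝ → E} {K t : ℝ} (hf : ∀ s, HasDerivAt f (f' s) s)
    (hbound : ∀ s, ‖f' s‖ ≤ K * |s - t|) : ‖f t - f 0‖ ≤ K * t ^ 2 / 2 := by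
  wlog ht : 0 ≤ t generalizing f f' t
  · have hf_neg : ∀ s, HasDerivAt (fun u => f (-u)) (-f' (-s)) s := fun s => by
      simpa [Function.comp_def] using (hf (-s)).scomp s (hasDerivAt_neg s)
    have := this hf_neg (t := -t) (fun s => by
      rw [norm_neg, ← abs_neg]; convert hbound (-s) using 3; ring) (by linarith)
    simpa using this
  have hg : ∀ s, HasDerivAt (fun u => f u - f 0) (f' s) s := fun s => (hf s).sub_const _
  have key := image_norm_le_of_norm_deriv_right_le_deriv_boundary
    (f := fun u => f u - f 0) (B := fun s => K * (t * s - s ^ 2 / 2)) (B' := fun s => K * (t - s))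
    (fun s _ => (hg s).continuousAt.continuousWithinAt) (fun s _ => (hg s).hasDerivWithinAt)
    (by simp)
    (fun s => (((hasDerivAt_id' s).const_mul t).sub ((hasDerivAt_pow 2 s).div_const 2)).const_mul K
      |>.congr_deriv (by ring))
    (fun s hs => by
      have := hbound s
      rwa [abs_of_nonpos (by linarith [hs.2]), neg_sub] at this)
    (Set.right_mem_Icc.mpr ht)
  exact key.trans_eq (by ring)

theorem I_mul_ofReal_smul {M : Type*} [AddCommGroup M] [Module ℂ M] (s : ℝ) (x : M) :
    (Complex.I * s) • x = s • Complex.I • x := by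
  rw [mul_comm, mul_smul, Complex.coe_smul]

theorem perturbed_commutator_bound_general
    {E : Type*} [NormedAddCommGroup E] [InnerProductSpace ℂ E] [FiniteDimensional ℂ E]
    (H V B : E →L[ℂ] E) (hH : IsSelfAdjoint H) (hV : IsSelfAdjoint V) (K : ℝ)
    (hLRB : ∀ t : ℝ,
      ‖NormedSpace.exp ((Complex.I * (t : ℂ)) • H) * B *
            NormedSpace.exp (-(Complex.I * (t : ℂ)) • H) * V -
          V * (NormedSpace.exp ((Complex.I * (t : ℂ)) • H) * B *
            NormedSpace.exp (-(Complex.I * (t : ℂ)) • H))‖ ≤ K * |t|) :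
    ∀ t : ℝ,
      ‖NormedSpace.exp (-(Complex.I * (t : ℂ)) • (H + V)) * B *
            NormedSpace.exp ((Complex.I * (t : ℂ)) • (H + V)) * V -
          V * (NormedSpace.exp (-(Complex.I * (t : ℂ)) • (H + V)) * B *
            NormedSpace.exp ((Complex.I * (t : ℂ)) • (H + V)))‖ ≤
        K * |t| * (1 + ‖V‖ * |t|) := by
  simp only [neg_smul, I_mul_ofReal_smul] at hLRB ⊢
  intro t
  set Y : E →L[ℂ] E := Complex.I • H
  set X : E →L[ℂ] E := -(Complex.I • (H + V))
  have free : ∀ s : ℝ, ‖expConj (s • Y) B * V - V * expConj (s • Y) B‖ ≤ K * |s| := hLRB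
  let m : ℝ → E →L[ℂ] E := fun u => expConj (u • Y) (expConj ((-t) • Y) B)
  let f : ℝ → E →L[ℂ] E := fun u => expConj (u • X) (m u)
  have hf : ∀ u, HasDerivAt f (expConj (u • X) (Complex.I • (m u * V - V * m u))) u := fun u =>
    (hasDerivAt_expConj X (hasDerivAt_expConj_const Y _ u)).congr_deriv (by
      -- `X + Y = -iV`: only the perturbation survives in the generator of `f`.
      congr 1
      simp only [X, Y, smul_add, neg_add, add_mul, mul_add, neg_mul, mul_neg, smul_mul_assoc,
        mul_smul_comm, smul_sub]
      abel)
  have hf_bound : ∀ u, ‖expConj (u • X) (Complex.I • (m u * V - V * m u))‖ ≤ K * |u - t| := by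
    intro u
    have hX : u • X ∈ skewAdjoint (E →L[ℂ] E) :=
      skewAdjoint.smul_mem u (neg_mem (hH.add hV).I_smul_mem_skewAdjoint)
    rw [norm_expConj_of_mem_skewAdjoint hX, norm_smul, Complex.norm_I, one_mul]
    simpa only [m, expConj_smul_expConj_smul, ← sub_eq_add_neg] using free (u - t)
  have hft : f t = exp (-(t • Complex.I • (H + V))) * B * exp (t • Complex.I • (H + V)) := by
    simp only [f, m, expConj_smul_expConj_smul, add_neg_cancel, zero_smul, expConj_zero]
    simp only [expConj, X, smul_neg, neg_neg]
  have hf0 : f 0 = expConj ((-t) • Y) B := by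
    simp only [f, m, zero_smul, expConj_zero]
  rw [← hft]
  calc ‖f t * V - V * f t‖ ≤ ‖f 0 * V - V * f 0‖ + 2 * ‖V‖ * ‖f t - f 0‖ := norm_commutator_le _ _ _
    _ ≤ K * |-t| + 2 * ‖V‖ * (K * t ^ 2 / 2) := by
      gcongr
      · rw [hf0]; exact free (-t)
      · exact norm_sub_le_of_norm_deriv_le_mul_abs_sub hf hf_bound
    _ = K * |t| * (1 + ‖V‖ * |t|) := by rw [abs_neg, ← sq_abs t]; ring

/-- Perturbed commutator bound: if the unperturbed Heisenberg dynamics of `B` satisfies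
`‖[τ_t(B), V]‖ ≤ K |t|`, then the dynamics perturbed by `V` satisfies
`‖[e^{-it(H+V)} B e^{it(H+V)}, V]‖ ≤ K |t| (1 + ‖V‖ |t|)`. -/
theorem perturbed_commutator_bound
    {E : Type*} [NormedAddCommGroup E] [InnerProductSpace ℂ E] [FiniteDimensional ℂ E]
    (H V B : E →L[ℂ] E) (hH : IsSelfAdjoint H) (hV : IsSelfAdjoint V) (K : ℝ) (hK : 0 ≤ K)
    (hLRB : ∀ t : ℝ,
      ‖NormedSpace.exp ((Complex.I * (t : ℂ)) • H) * B *
            NormedSpace.exp (-(Complex.I * (t : ℂ)) • H) * V -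
          V * (NormedSpace.exp ((Complex.I * (t : ℂ)) • H) * B *
            NormedSpace.exp (-(Complex.I * (t : ℂ)) • H))‖ ≤ K * |t|) :
    ∀ t : ℝ,
      ‖NormedSpace.exp (-(Complex.I * (t : ℂ)) • (H + V)) * B *
            NormedSpace.exp ((Complex.I * (t : ℂ)) • (H + V)) * V -
          V * (NormedSpace.exp (-(Complex.I * (t : ℂ)) • (H + V)) * B *
            NormedSpace.exp ((Complex.I * (t : ℂ)) • (H + V)))‖ ≤
        K * |t| * (1 + ‖V‖ * |t|) :=
  perturbed_commutator_bound_general H V B hH hV K hLRB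
end
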